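/- Suppose N : ℕ → ℚ satisfies Kontsevich's recursion: for all d ≥ 2, N(d) = (1/(6(d-1))) Σ_{d1+d2=d, d1,d2≥1} (d1 d2 - 2 (d1-d2)^2/(3d-2)) C(3d-2, 3d1-1) d1 d2 N(d1) N(d2). Then for every d ≥ 2, the sum A(d) + B(d) equals F(d), where A(d) = (3(d-1)(d-2)(d-3)/d) N(d) + (1/2) Σ_{d1+d2=d} (d1^2 d2^2 - 6 d1 d2 - 4 + 18 d1 d2/d) C(3d-2, 3d1-1) d1 d2 N(d1) N(d2), B(d) = (6(3d^2-12d+9)/d) N(d) + 3 Σ_{d1+d2=d} (d1 d2 + 4 - 9 d1 d2/d) C(3d-2, 3d1-1) d1 d2 N(d1) N(d2), and F(d) = 3(d^2-1) N(d) + (1/2) Σ_{d1+d2=d} (d1^2 d2^2 + 28 - 16(9 d1 d2 - 1)/(3d-2)) C(3d-2, 3d1-1) d1 d2 N(d1) N(d2). -/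
import Mathlib


open Finset

/-- The genus-two formula of Theorem 1. -/
noncomputable def F (N : ℕ → ℚ) (d : ℕ) : ℚ :=
  3 * ((d : ℚ) ^ 2 - 1) * N d +
    (1 / 2) * ∑ d1 ∈ Finset.Ico 1 d,
      (((d1 : ℚ) ^ 2 * ((d : ℚ) - (d1 : ℚ)) ^ 2 + 28 -
          16 * (9 * (d1 : ℚ) * ((d : ℚ) - (d1 : ℚ)) - 1) / (3 * (d : ℚ) - 2)) *
        (Nat.choose (3 * d - 2) (3 * d1 - 1) : ℚ) * (d1 : ℚ) * ((d : ℚ) - (d1 : ℚ)) *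
        N d1 * N (d - d1))

/-- The contribution of Proposition 2 (the space `W₁₁`). -/
noncomputable def A (N : ℕ → ℚ) (d : ℕ) : ℚ :=
  (3 * ((d : ℚ) - 1) * ((d : ℚ) - 2) * ((d : ℚ) - 3) / (d : ℚ)) * N d +
    (1 / 2) * ∑ d1 ∈ Finset.Ico 1 d,
      (((d1 : ℚ) ^ 2 * ((d : ℚ) - (d1 : ℚ)) ^ 2 - 6 * (d1 : ℚ) * ((d : ℚ) - (d1 : ℚ)) - 4 +
          18 * (d1 : ℚ) * ((d : ℚ) - (d1 : ℚ)) / (d : ℚ)) *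
        (Nat.choose (3 * d - 2) (3 * d1 - 1) : ℚ) * (d1 : ℚ) * ((d : ℚ) - (d1 : ℚ)) *
        N d1 * N (d - d1))

/-- The contribution of Proposition 3 (the space `W₁₃`). -/
noncomputable def B (N : ℕ → ℚ) (d : ℕ) : ℚ :=
  (6 * (3 * (d : ℚ) ^ 2 - 12 * (d : ℚ) + 9) / (d : ℚ)) * N d +
    3 * ∑ d1 ∈ Finset.Ico 1 d,
      (((d1 : ℚ) * ((d : ℚ) - (d1 : ℚ)) + 4 -
          9 * (d1 : ℚ) * ((d : ℚ) - (d1 : ℚ)) / (d : ℚ)) *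
        (Nat.choose (3 * d - 2) (3 * d1 - 1) : ℚ) * (d1 : ℚ) * ((d : ℚ) - (d1 : ℚ)) *
        N d1 * N (d - d1))

/-- If `N` satisfies Kontsevich's recursion, then the sum of the contributions of
Propositions 2 and 3 equals the formula of Theorem 1. -/
theorem stmt_5 (N : ℕ → ℚ)
    (hrec : ∀ d : ℕ, 2 ≤ d →
      N d = (1 / (6 * ((d : ℚ) - 1))) * ∑ d1 ∈ Finset.Ico 1 d,
        (((d1 : ℚ) * ((d : ℚ) - (d1 : ℚ)) -
            2 * ((d1 : ℚ) - ((d : ℚ) - (d1 : ℚ))) ^ 2 / (3 * (d : ℚ) - 2)) *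
          (Nat.choose (3 * d - 2) (3 * d1 - 1) : ℚ) * (d1 : ℚ) * ((d : ℚ) - (d1 : ℚ)) *
          N d1 * N (d - d1))) :
    ∀ d : ℕ, 2 ≤ d → A N d + B N d = F N d := by
  intro d hd
  have hdQ : (2 : ℚ) ≤ (d : ℚ) := by exact_mod_cast hd
  have hd0 : (d : ℚ) ≠ 0 := by linarith
  have hd1 : (d : ℚ) - 1 ≠ 0 := by intro h; nlinarith [h]
  have h3d : 3 * (d : ℚ) - 2 ≠ 0 := by intro h; nlinarith [h]
  rw [A, B, F, hrec d hd]
  simp only [Finset.mul_sum]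
  rw [← Finset.sum_add_distrib, ← Finset.sum_add_distrib, ← Finset.sum_add_distrib,
    ← Finset.sum_add_distrib]
  refine Finset.sum_congr rfl fun x hx => ?_
  field_simp
  ring
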